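/- arXiv:1412.8105 — 2 statements merged into one kernel-verified Lean document; each statement's English description precedes it below -/
import Mathlib

section
/- Zero-one law for almost sure stabilities: (i) either ℙ(limsup_{k→∞} Tr(P_k) < ∞) = 1 or ℙ(limsup_{k→∞} Tr(P_k) < ∞) = 0; and (ii) either ℙ(liminf_{k→∞} Tr(P_k) < ∞) = 1 or ℙ(liminf_{k→∞} Tr(P_k) < ∞) = 0. -/
open MeasureTheory Filter Matrix

noncomputable section

/-- The operator `h(X) = A X Aᵀ + Q`. -/
def hOp {n : ℕ} (A Q : Matrix (Fin n) (Fin n) ℝ) (X : Matrix (Fin n) (Fin n) ℝ) :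
    Matrix (Fin n) (Fin n) ℝ :=
  A * X * Aᵀ + Q

/-- The operator `g(X) = A X Aᵀ + Q − A X Cᵀ (C X Cᵀ + R)⁻¹ C X Aᵀ`. -/
def gOp {n m : ℕ} (A Q : Matrix (Fin n) (Fin n) ℝ) (C : Matrix (Fin m) (Fin n) ℝ)
    (R : Matrix (Fin m) (Fin m) ℝ) (X : Matrix (Fin n) (Fin n) ℝ) :
    Matrix (Fin n) (Fin n) ℝ :=
  A * X * Aᵀ + Q - A * X * Cᵀ * (C * X * Cᵀ + R)⁻¹ * (C * X * Aᵀ)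

/-- The stacked observability matrix `[C; CA; …; CA^(k−1)]`. -/
def obsMat {n m : ℕ} (C : Matrix (Fin m) (Fin n) ℝ) (A : Matrix (Fin n) (Fin n) ℝ) (k : ℕ) :
    Matrix (Fin k × Fin m) (Fin n) ℝ :=
  fun p j => (C * A ^ (p.1 : ℕ)) p.2 j

/-- The controllability matrix `[S, AS, …, A^(n−1) S]`. -/
def ctrbMat {n : ℕ} (A : Matrix (Fin n) (Fin n) ℝ) (S : Matrix (Fin n) (Fin n) ℝ) :
    Matrix (Fin n) (Fin n × Fin n) ℝ :=
  fun i p => (A ^ (p.1 : ℕ) * S) i p.2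

/-- The pathwise covariance recursion: `P 0 = P0` (i.e. `P₁ = Π`), and
`P (k+1) = g (P k)` if the packet `γ k` arrives, `P (k+1) = h (P k)` otherwise. -/
def filtSeq {n m : ℕ} (A Q : Matrix (Fin n) (Fin n) ℝ) (C : Matrix (Fin m) (Fin n) ℝ)
    (R : Matrix (Fin m) (Fin m) ℝ) {Ω : Type*} (γ : ℕ → Ω → Bool)
    (P0 : Matrix (Fin n) (Fin n) ℝ) : ℕ → Ω → Matrix (Fin n) (Fin n) ℝ
  | 0, _ => P0
  | k + 1, ω =>
      if γ k ω then gOp A Q C R (filtSeq A Q C R γ P0 k ω)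
      else hOp A Q (filtSeq A Q C R γ P0 k ω)

/-- The σ-algebra generated by `γ 0, …, γ k`. -/
def pastSigma {Ω : Type*} (γ : ℕ → Ω → Bool) (k : ℕ) : MeasurableSpace Ω :=
  ⨆ i ∈ {i : ℕ | i ≤ k}, MeasurableSpace.comap (γ i) ⊤

/-- The σ-algebra generated by `γ j, γ (j+1), …`. -/
def futureSigma {Ω : Type*} (γ : ℕ → Ω → Bool) (j : ℕ) : MeasurableSpace Ω :=
  ⨆ i ∈ {i : ℕ | j ≤ i}, MeasurableSpace.comap (γ i) ⊤

/-- A `{0,1}`-valued process is `*`-mixing if there are an integer `N ≥ 1` and a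
nonincreasing function `f` on `{N, N+1, …}` with `f n → 0` such that
`|ℙ(𝒜 ∩ ℬ) − ℙ(𝒜)ℙ(ℬ)| ≤ f(n) ℙ(𝒜) ℙ(ℬ)` whenever `n ≥ N`,
`𝒜 ∈ σ(γ 0, …, γ k)` and `ℬ ∈ σ(γ (k+n), γ (k+n+1), …)`. -/
def StarMixing {Ω : Type*} [MeasurableSpace Ω] (ℙ : Measure Ω) (γ : ℕ → Ω → Bool) : Prop :=
  ∃ N : ℕ, 0 < N ∧ ∃ f : ℕ → ℝ,
    (∀ a b : ℕ, N ≤ a → a ≤ b → f b ≤ f a) ∧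
    Tendsto f atTop (nhds 0) ∧
    ∀ nn : ℕ, N ≤ nn → ∀ k : ℕ, ∀ s t : Set Ω,
      MeasurableSet[pastSigma γ k] s → MeasurableSet[futureSigma γ (k + nn)] t →
      |(ℙ (s ∩ t)).toReal - (ℙ s).toReal * (ℙ t).toReal| ≤
        f nn * (ℙ s).toReal * (ℙ t).toReal

/-!
Both events are tail events of the arrival process, and a `*`-mixing process has a trivial tail
σ-algebra: letting the gap in the mixing inequality grow shows that a tail event is independent
of every `σ(γ 0, …, γ k)`, hence (by a π-λ argument) of itself.

That the events are tail events is a forgetting property of the Riccati recursion. Write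
`g = h ∘ Ξ` with `Ξ` the measurement update, which is the minimum over all gains `K` of the Joseph
form. Then `g` and `h` are monotone, satisfy `f (a • X) ≤ a • f X` for `a ≥ 1`, and
`δ • h X ≤ g X` for some `δ > 0` depending on `X`. Hence after `n` steps every trajectory
dominates a positive multiple of the controllability Gramian, which is positive definite, so from
time `n` on the trajectories started at any two initial conditions are within a constant factor
of each other; `limsup` and `liminf` are insensitive to such factors and to time shifts.
-/

open scoped MatrixOrder

namespace Matrix

variable {ι κ : Type*}

lemma IsHermitian.transpose_eq_self {X : Matrix ι ι ℝ} (hX : X.IsHermitian) : Xᵀ = X := by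
  rw [← conjTranspose_eq_transpose_of_trivial, hX.eq]

variable [Fintype ι] [Fintype κ]

lemma PosSemidef.mul_mul_transpose_same {X : Matrix ι ι ℝ} (hX : X.PosSemidef)
    (B : Matrix κ ι ℝ) : (B * X * Bᵀ).PosSemidef := by
  simpa only [conjTranspose_eq_transpose_of_trivial] using hX.mul_mul_conjTranspose_same B

lemma mul_mul_transpose_le_mul_mul_transpose {X Y : Matrix ι ι ℝ} (h : X ≤ Y)
    (B : Matrix κ ι ℝ) : B * X * Bᵀ ≤ B * Y * Bᵀ := by
  rw [le_iff] at h ⊢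
  simpa only [Matrix.mul_sub, Matrix.sub_mul] using h.mul_mul_transpose_same B

lemma PosSemidef.mul_mul_transpose_add_posDef {X : Matrix ι ι ℝ} (hX : X.PosSemidef)
    (C : Matrix κ ι ℝ) {R : Matrix κ κ ℝ} (hR : R.PosDef) : (C * X * Cᵀ + R).PosDef :=
  PosDef.posSemidef_add (hX.mul_mul_transpose_same C) hR

lemma trace_le_trace {X Y : Matrix ι ι ℝ} (h : X ≤ Y) : X.trace ≤ Y.trace := by
  simpa [trace_sub] using (le_iff.mp h).trace_nonneg

variable [DecidableEq ι]

lemma isUnit_of_rank_eq_card {M : Matrix ι ι ℝ} (h : M.rank = Fintype.card ι) : IsUnit M := by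
  have hrange : LinearMap.range M.mulVecLin = ⊤ :=
    Submodule.eq_top_of_finrank_eq (by rwa [Module.finrank_fintype_fun_eq_card])
  exact mulVec_surjective_iff_isUnit.mp (LinearMap.range_eq_top.mp hrange)

lemma PosDef.exists_pos_smul_le {P R : Matrix ι ι ℝ} (hP : P.IsHermitian) (hR : R.PosDef) :
    ∃ ρ : ℝ, 0 < ρ ∧ ρ • P ≤ R := by
  rcases subsingleton_or_nontrivial (Matrix ι ι ℝ) with _ | _
  · exact ⟨1, one_pos, (Subsingleton.elim _ _).le⟩
  obtain ⟨r, hr, hrR⟩ := (CFC.exists_pos_algebraMap_le_iff hR.isHermitian.isSelfAdjoint).mpr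
    fun x hx => hR.isStrictlyPositive.spectrum_pos hx
  obtain ⟨c, hc⟩ := (isCompact_iff_compactSpace.mpr inferInstance :
    IsCompact (spectrum ℝ P)).bddAbove
  have hPc : P ≤ algebraMap ℝ _ (max c 1) :=
    le_algebraMap_of_spectrum_le (fun x hx => (hc hx).trans (le_max_left c 1))
      hP.isSelfAdjoint
  have hc1 : 0 < max c 1 := lt_max_of_lt_right one_pos
  refine ⟨r / max c 1, by positivity, ?_⟩
  calc (r / max c 1) • P ≤ (r / max c 1) • algebraMap ℝ _ (max c 1) :=
        smul_le_smul_of_nonneg_left hPc (by positivity)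
    _ = algebraMap ℝ _ r := by rw [Algebra.smul_def, ← map_mul, div_mul_cancel₀ r hc1.ne']
    _ ≤ R := hrR

lemma PosSemidef.spectral_sqrt_mul_transpose {Q : Matrix ι ι ℝ} (hQ : Q.PosSemidef) :
    let S : Matrix ι ι ℝ := (hQ.1.eigenvectorUnitary : Matrix ι ι ℝ) *
      diagonal (Real.sqrt ∘ hQ.1.eigenvalues) * (star hQ.1.eigenvectorUnitary : Matrix ι ι ℝ)
    S * Sᵀ = Q := by
  intro S
  have hS : S = cfc Real.sqrt Q := by
    rw [hQ.1.cfc_eq, IsHermitian.cfc, Unitary.conjStarAlgAut_apply]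
    rfl
  have hSt : Sᵀ = S := by
    simpa [hS, ← conjTranspose_eq_transpose_of_trivial, star_eq_conjTranspose] using
      (cfc_predicate Real.sqrt Q).star_eq
  rw [hSt, hS, ← cfc_mul Real.sqrt Real.sqrt Q]
  conv_rhs => rw [← cfc_id ℝ Q]
  exact cfc_congr fun x hx => Real.mul_self_sqrt (spectrum_nonneg_of_nonneg hQ.nonneg hx)

end Matrix

section MeasurementUpdate

variable {ι κ : Type*} [Fintype ι] [Fintype κ] [DecidableEq ι]
  {C : Matrix κ ι ℝ} {R : Matrix κ κ ℝ} {X : Matrix ι ι ℝ}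

/-- The covariance after a measurement update with an arbitrary (not necessarily optimal)
gain `K`. -/
def josephForm (C : Matrix κ ι ℝ) (R : Matrix κ κ ℝ) (K : Matrix ι κ ℝ) (X : Matrix ι ι ℝ) :
    Matrix ι ι ℝ :=
  (1 - K * C) * X * (1 - K * C)ᵀ + K * R * Kᵀ

lemma josephForm_posSemidef (hX : X.PosSemidef) (hR : R.PosDef) (K : Matrix ι κ ℝ) :
    (josephForm C R K X).PosSemidef :=
  (hX.mul_mul_transpose_same _).add (hR.posSemidef.mul_mul_transpose_same K)

lemma josephForm_mono {Y : Matrix ι ι ℝ} (h : X ≤ Y) (K : Matrix ι κ ℝ) :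
    josephForm C R K X ≤ josephForm C R K Y :=
  add_le_add_left (mul_mul_transpose_le_mul_mul_transpose h _) _

lemma josephForm_smul_le (hR : R.PosDef) (K : Matrix ι κ ℝ) {a : ℝ} (ha : 1 ≤ a) :
    josephForm C R K (a • X) ≤ a • josephForm C R K X := by
  have hKRK := (hR.posSemidef.mul_mul_transpose_same K).nonneg
  rw [josephForm, josephForm, smul_add, Matrix.mul_smul, Matrix.smul_mul]
  exact add_le_add_right (le_smul_of_one_le_left hKRK ha) _

lemma smul_le_mul_mul_transpose_add (hX : X.PosSemidef) (M : Matrix ι ι ℝ) {ρ : ℝ} (hρ : 0 ≤ ρ) :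
    (ρ / (1 + ρ)) • X ≤ (1 - M) * X * (1 - M)ᵀ + ρ • (M * X * Mᵀ) := by
  have hρ' : (1 + ρ) ≠ 0 := by positivity
  have key : (1 - M) * X * (1 - M)ᵀ + ρ • (M * X * Mᵀ) - (ρ / (1 + ρ)) • X =
      (1 + ρ)⁻¹ • ((1 - (1 + ρ) • M) * X * (1 - (1 + ρ) • M)ᵀ) := by
    simp only [transpose_sub, transpose_one, transpose_smul, Matrix.sub_mul, Matrix.mul_sub,
      Matrix.smul_mul, Matrix.mul_smul, Matrix.one_mul, Matrix.mul_one, smul_sub, smul_smul]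
    match_scalars <;> field_simp
    ring
  rw [le_iff, key]
  exact (hX.mul_mul_transpose_same _).smul (by positivity)

variable [DecidableEq κ]

def measUpdate (C : Matrix κ ι ℝ) (R : Matrix κ κ ℝ) (X : Matrix ι ι ℝ) : Matrix ι ι ℝ :=
  X - X * Cᵀ * (C * X * Cᵀ + R)⁻¹ * (C * X)

def kalmanGain (C : Matrix κ ι ℝ) (R : Matrix κ κ ℝ) (X : Matrix ι ι ℝ) : Matrix ι κ ℝ :=
  X * Cᵀ * (C * X * Cᵀ + R)⁻¹

lemma josephForm_eq_measUpdate_add (hX : Xᵀ = X) (hR : Rᵀ = R)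
    (hS : IsUnit (C * X * Cᵀ + R).det) (K : Matrix ι κ ℝ) :
    josephForm C R K X = measUpdate C R X +
      (K - kalmanGain C R X) * (C * X * Cᵀ + R) * (K - kalmanGain C R X)ᵀ := by
  set S := C * X * Cᵀ + R with hSdef
  set L := X * Cᵀ * S⁻¹
  change josephForm C R K X = measUpdate C R X + (K - L) * S * (K - L)ᵀ
  have hSt : Sᵀ = S := by simp [hSdef, transpose_add, transpose_mul, hX, hR, Matrix.mul_assoc]
  have hLS : L * S = X * Cᵀ := by rw [Matrix.mul_assoc, nonsing_inv_mul _ hS, Matrix.mul_one]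
  have hSL : S * Lᵀ = C * X := by
    rw [← hSt, ← transpose_mul, hLS, transpose_mul, hX, transpose_transpose]
  have hLSL : L * S * Lᵀ = X * Cᵀ * S⁻¹ * (C * X) := by rw [Matrix.mul_assoc, hSL]
  have expand : (K - L) * S * (K - L)ᵀ = K * S * Kᵀ - K * (S * Lᵀ) - L * S * Kᵀ + L * S * Lᵀ := by
    simp only [transpose_sub, Matrix.sub_mul, Matrix.mul_sub, Matrix.mul_assoc]
    abel
  rw [expand, hLSL, hSL, hLS, josephForm, measUpdate, ← hSdef]
  simp only [hSdef, transpose_sub, transpose_one, transpose_mul, Matrix.sub_mul, Matrix.mul_sub,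
    Matrix.mul_add, Matrix.add_mul, Matrix.one_mul, Matrix.mul_one, Matrix.mul_assoc]
  abel

lemma measUpdate_le_josephForm (hX : X.PosSemidef) (hR : R.PosDef) (K : Matrix ι κ ℝ) :
    measUpdate C R X ≤ josephForm C R K X := by
  have hS := hX.mul_mul_transpose_add_posDef C hR
  rw [josephForm_eq_measUpdate_add hX.isHermitian.transpose_eq_self
    hR.isHermitian.transpose_eq_self hS.det_pos.ne'.isUnit K]
  exact le_add_of_nonneg_right (hS.posSemidef.mul_mul_transpose_same _).nonneg

lemma measUpdate_eq_josephForm (hX : X.PosSemidef) (hR : R.PosDef) :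
    measUpdate C R X = josephForm C R (kalmanGain C R X) X := by
  rw [josephForm_eq_measUpdate_add hX.isHermitian.transpose_eq_self
    hR.isHermitian.transpose_eq_self (hX.mul_mul_transpose_add_posDef C hR).det_pos.ne'.isUnit]
  simp

lemma measUpdate_posSemidef (hX : X.PosSemidef) (hR : R.PosDef) :
    (measUpdate C R X).PosSemidef := by
  rw [measUpdate_eq_josephForm hX hR]
  exact josephForm_posSemidef hX hR _

lemma measUpdate_mono {Y : Matrix ι ι ℝ} (hX : X.PosSemidef) (hR : R.PosDef) (h : X ≤ Y) :
    measUpdate C R X ≤ measUpdate C R Y := by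
  have hY : Y.PosSemidef := (hX.nonneg.trans h).posSemidef
  calc measUpdate C R X ≤ josephForm C R (kalmanGain C R Y) X := measUpdate_le_josephForm hX hR _
    _ ≤ josephForm C R (kalmanGain C R Y) Y := josephForm_mono h _
    _ = measUpdate C R Y := (measUpdate_eq_josephForm hY hR).symm

lemma measUpdate_smul_le (hX : X.PosSemidef) (hR : R.PosDef) {a : ℝ} (ha : 1 ≤ a) :
    measUpdate C R (a • X) ≤ a • measUpdate C R X := by
  calc measUpdate C R (a • X) ≤ josephForm C R (kalmanGain C R X) (a • X) :=
        measUpdate_le_josephForm (hX.smul (by linarith)) hR _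
    _ ≤ a • josephForm C R (kalmanGain C R X) X := josephForm_smul_le hR _ ha
    _ = a • measUpdate C R X := by rw [measUpdate_eq_josephForm hX hR]

lemma exists_pos_smul_le_measUpdate (hX : X.PosSemidef) (hR : R.PosDef) :
    ∃ δ : ℝ, 0 < δ ∧ δ ≤ 1 ∧ δ • X ≤ measUpdate C R X := by
  obtain ⟨ρ, hρ, hρR⟩ := PosDef.exists_pos_smul_le (hX.mul_mul_transpose_same C).isHermitian hR
  set L := kalmanGain C R X
  refine ⟨ρ / (1 + ρ), by positivity, div_le_one_of_le₀ (by linarith) (by positivity), ?_⟩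
  calc (ρ / (1 + ρ)) • X ≤ (1 - L * C) * X * (1 - L * C)ᵀ + ρ • (L * C * X * (L * C)ᵀ) :=
        smul_le_mul_mul_transpose_add hX _ hρ.le
    _ ≤ (1 - L * C) * X * (1 - L * C)ᵀ + L * R * Lᵀ := by
        gcongr
        have := mul_mul_transpose_le_mul_mul_transpose hρR L
        simpa only [transpose_mul, Matrix.mul_smul, Matrix.smul_mul, Matrix.mul_assoc] using this
    _ = measUpdate C R X := (measUpdate_eq_josephForm hX hR).symm

end MeasurementUpdate

section Riccati

variable {n m : ℕ} {A Q : Matrix (Fin n) (Fin n) ℝ} {C : Matrix (Fin m) (Fin n) ℝ}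
  {R : Matrix (Fin m) (Fin m) ℝ} {X Y : Matrix (Fin n) (Fin n) ℝ}

lemma gOp_eq_hOp_measUpdate (A Q : Matrix (Fin n) (Fin n) ℝ) (C : Matrix (Fin m) (Fin n) ℝ)
    (R : Matrix (Fin m) (Fin m) ℝ) (X : Matrix (Fin n) (Fin n) ℝ) :
    gOp A Q C R X = hOp A Q (measUpdate C R X) := by
  simp only [gOp, hOp, measUpdate, Matrix.mul_sub, Matrix.sub_mul, Matrix.mul_assoc]
  abel

lemma hOp_posSemidef (hQ : Q.PosSemidef) (hX : X.PosSemidef) : (hOp A Q X).PosSemidef :=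
  (hX.mul_mul_transpose_same A).add hQ

lemma hOp_mono (h : X ≤ Y) : hOp A Q X ≤ hOp A Q Y :=
  add_le_add_left (mul_mul_transpose_le_mul_mul_transpose h A) Q

lemma hOp_smul_le (hQ : Q.PosSemidef) {a : ℝ} (ha : 1 ≤ a) : hOp A Q (a • X) ≤ a • hOp A Q X := by
  rw [hOp, hOp, smul_add, Matrix.mul_smul, Matrix.smul_mul]
  exact add_le_add_right (le_smul_of_one_le_left hQ.nonneg ha) _

lemma smul_hOp_le (hQ : Q.PosSemidef) {c : ℝ} (hc : c ≤ 1) :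
    c • hOp A Q X ≤ hOp A Q (c • X) := by
  rw [hOp, hOp, smul_add, Matrix.mul_smul, Matrix.smul_mul]
  exact add_le_add_right (smul_le_of_le_one_left hQ.nonneg hc) _

lemma gOp_posSemidef (hQ : Q.PosSemidef) (hR : R.PosDef) (hX : X.PosSemidef) :
    (gOp A Q C R X).PosSemidef := by
  rw [gOp_eq_hOp_measUpdate]
  exact hOp_posSemidef hQ (measUpdate_posSemidef hX hR)

lemma gOp_mono (hR : R.PosDef) (hX : X.PosSemidef) (h : X ≤ Y) :
    gOp A Q C R X ≤ gOp A Q C R Y := by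
  simp only [gOp_eq_hOp_measUpdate]
  exact hOp_mono (measUpdate_mono hX hR h)

lemma gOp_smul_le (hQ : Q.PosSemidef) (hR : R.PosDef) (hX : X.PosSemidef) {a : ℝ} (ha : 1 ≤ a) :
    gOp A Q C R (a • X) ≤ a • gOp A Q C R X := by
  simp only [gOp_eq_hOp_measUpdate]
  exact (hOp_mono (measUpdate_smul_le hX hR ha)).trans (hOp_smul_le hQ ha)

lemma exists_pos_smul_hOp_le_gOp (hQ : Q.PosSemidef) (hR : R.PosDef) (hX : X.PosSemidef) :
    ∃ δ : ℝ, 0 < δ ∧ δ ≤ 1 ∧ δ • hOp A Q X ≤ gOp A Q C R X := by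
  obtain ⟨δ, hδ₀, hδ₁, hδX⟩ := exists_pos_smul_le_measUpdate (C := C) hX hR
  refine ⟨δ, hδ₀, hδ₁, (smul_hOp_le hQ hδ₁).trans ?_⟩
  rw [gOp_eq_hOp_measUpdate]
  exact hOp_mono hδX

def riccatiStep (A Q : Matrix (Fin n) (Fin n) ℝ) (C : Matrix (Fin m) (Fin n) ℝ)
    (R : Matrix (Fin m) (Fin m) ℝ) (b : Bool) (X : Matrix (Fin n) (Fin n) ℝ) :
    Matrix (Fin n) (Fin n) ℝ :=
  if b then gOp A Q C R X else hOp A Q X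

lemma riccatiStep_posSemidef (hQ : Q.PosSemidef) (hR : R.PosDef) (b : Bool)
    (hX : X.PosSemidef) : (riccatiStep A Q C R b X).PosSemidef := by
  cases b
  exacts [hOp_posSemidef hQ hX, gOp_posSemidef hQ hR hX]

lemma riccatiStep_mono (hR : R.PosDef) (b : Bool) (hX : X.PosSemidef) (h : X ≤ Y) :
    riccatiStep A Q C R b X ≤ riccatiStep A Q C R b Y := by
  cases b
  exacts [hOp_mono h, gOp_mono hR hX h]

lemma riccatiStep_smul_le (hQ : Q.PosSemidef) (hR : R.PosDef) (b : Bool) (hX : X.PosSemidef)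
    {a : ℝ} (ha : 1 ≤ a) : riccatiStep A Q C R b (a • X) ≤ a • riccatiStep A Q C R b X := by
  cases b
  exacts [hOp_smul_le hQ ha, gOp_smul_le hQ hR hX ha]

lemma exists_pos_smul_hOp_le_riccatiStep (hQ : Q.PosSemidef) (hR : R.PosDef) (b : Bool)
    (hX : X.PosSemidef) : ∃ δ : ℝ, 0 < δ ∧ δ ≤ 1 ∧ δ • hOp A Q X ≤ riccatiStep A Q C R b X := by
  cases b
  exacts [⟨1, one_pos, le_rfl, (one_smul ℝ _).le⟩, exists_pos_smul_hOp_le_gOp hQ hR hX]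

def riccatiSeq (A Q : Matrix (Fin n) (Fin n) ℝ) (C : Matrix (Fin m) (Fin n) ℝ)
    (R : Matrix (Fin m) (Fin m) ℝ) (s : ℕ → Bool) (X : Matrix (Fin n) (Fin n) ℝ) :
    ℕ → Matrix (Fin n) (Fin n) ℝ
  | 0 => X
  | k + 1 => riccatiStep A Q C R (s k) (riccatiSeq A Q C R s X k)

lemma filtSeq_eq_riccatiSeq {Ω : Type*} (γ : ℕ → Ω → Bool) (X : Matrix (Fin n) (Fin n) ℝ)
    (ω : Ω) (k : ℕ) : filtSeq A Q C R γ X k ω = riccatiSeq A Q C R (fun i => γ i ω) X k := by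
  induction k with
  | zero => rfl
  | succ k ih => rw [filtSeq, ih]; rfl

variable {s : ℕ → Bool}

lemma riccatiSeq_posSemidef (hQ : Q.PosSemidef) (hR : R.PosDef) (hX : X.PosSemidef) (k : ℕ) :
    (riccatiSeq A Q C R s X k).PosSemidef := by
  induction k with
  | zero => exact hX
  | succ k ih => exact riccatiStep_posSemidef hQ hR _ ih

lemma riccatiSeq_mono (hQ : Q.PosSemidef) (hR : R.PosDef) (hX : X.PosSemidef) (h : X ≤ Y)
    (k : ℕ) : riccatiSeq A Q C R s X k ≤ riccatiSeq A Q C R s Y k := by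
  induction k with
  | zero => exact h
  | succ k ih => exact riccatiStep_mono hR _ (riccatiSeq_posSemidef hQ hR hX k) ih

lemma riccatiSeq_smul_le (hQ : Q.PosSemidef) (hR : R.PosDef) (hX : X.PosSemidef) {a : ℝ}
    (ha : 1 ≤ a) (k : ℕ) : riccatiSeq A Q C R s (a • X) k ≤ a • riccatiSeq A Q C R s X k := by
  induction k with
  | zero => exact le_rfl
  | succ k ih =>
    have haX : (a • X).PosSemidef := hX.smul (by linarith)
    exact (riccatiStep_mono hR _ (riccatiSeq_posSemidef hQ hR haX k) ih).trans
      (riccatiStep_smul_le hQ hR _ (riccatiSeq_posSemidef hQ hR hX k) ha)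

lemma riccatiSeq_add (s : ℕ → Bool) (X : Matrix (Fin n) (Fin n) ℝ) (j t : ℕ) :
    riccatiSeq A Q C R s X (t + j) =
      riccatiSeq A Q C R (fun i => s (i + j)) (riccatiSeq A Q C R s X j) t := by
  induction t with
  | zero => rw [Nat.zero_add]; rfl
  | succ t ih => rw [Nat.add_right_comm, riccatiSeq, ih]; rfl

lemma riccatiSeq_congr {s' : ℕ → Bool} (X : Matrix (Fin n) (Fin n) ℝ) {k : ℕ}
    (h : ∀ i < k, s i = s' i) : riccatiSeq A Q C R s X k = riccatiSeq A Q C R s' X k := by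
  induction k with
  | zero => rfl
  | succ k ih =>
    rw [riccatiSeq, riccatiSeq, ih fun i hi => h i (hi.trans k.lt_succ_self), h k k.lt_succ_self]

def ctrbGramian (A Q : Matrix (Fin n) (Fin n) ℝ) (k : ℕ) : Matrix (Fin n) (Fin n) ℝ :=
  ∑ i ∈ Finset.range k, A ^ i * Q * (A ^ i)ᵀ

lemma hOp_ctrbGramian (k : ℕ) : hOp A Q (ctrbGramian A Q k) = ctrbGramian A Q (k + 1) := by
  rw [ctrbGramian, ctrbGramian, Finset.sum_range_succ', hOp, Finset.mul_sum, Finset.sum_mul]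
  simp only [pow_succ', transpose_mul, pow_zero, transpose_one, Matrix.one_mul, Matrix.mul_one,
    Matrix.mul_assoc]

lemma exists_pos_smul_ctrbGramian_le_riccatiSeq (hQ : Q.PosSemidef) (hR : R.PosDef)
    (hX : X.PosSemidef) (k : ℕ) :
    ∃ ε : ℝ, 0 < ε ∧ ε ≤ 1 ∧ ε • ctrbGramian A Q k ≤ riccatiSeq A Q C R s X k := by
  induction k with
  | zero => exact ⟨1, one_pos, le_rfl, by simpa [ctrbGramian, riccatiSeq] using hX.nonneg⟩
  | succ k ih =>
    obtain ⟨ε, hε₀, hε₁, hεP⟩ := ih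
    obtain ⟨δ, hδ₀, hδ₁, hδP⟩ :=
      exists_pos_smul_hOp_le_riccatiStep (C := C) hQ hR (s k) (riccatiSeq_posSemidef hQ hR hX k)
    refine ⟨δ * ε, mul_pos hδ₀ hε₀, mul_le_one₀ hδ₁ hε₀.le hε₁, ?_⟩
    calc (δ * ε) • ctrbGramian A Q (k + 1) = δ • ε • hOp A Q (ctrbGramian A Q k) := by
          rw [hOp_ctrbGramian, mul_smul]
      _ ≤ δ • hOp A Q (ε • ctrbGramian A Q k) :=
          smul_le_smul_of_nonneg_left (smul_hOp_le hQ hε₁) hδ₀.le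
      _ ≤ δ • hOp A Q (riccatiSeq A Q C R s X k) :=
          smul_le_smul_of_nonneg_left (hOp_mono hεP) hδ₀.le
      _ ≤ riccatiSeq A Q C R s X (k + 1) := hδP

lemma ctrbMat_mul_transpose (A S : Matrix (Fin n) (Fin n) ℝ) :
    ctrbMat A S * (ctrbMat A S)ᵀ = ctrbGramian A (S * Sᵀ) n := by
  ext i j
  rw [mul_apply, Fintype.sum_prod_type, ctrbGramian, Matrix.sum_apply,
    ← Fin.sum_univ_eq_sum_range (fun a => (A ^ a * (S * Sᵀ) * (A ^ a)ᵀ) i j)]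
  refine Finset.sum_congr rfl fun a _ => ?_
  rw [show A ^ (a : ℕ) * (S * Sᵀ) * (A ^ (a : ℕ))ᵀ = A ^ (a : ℕ) * S * (A ^ (a : ℕ) * S)ᵀ by
    simp only [transpose_mul, Matrix.mul_assoc], mul_apply]
  rfl

lemma ctrbGramian_posDef {S : Matrix (Fin n) (Fin n) ℝ} (hrank : (ctrbMat A S).rank = n) :
    (ctrbGramian A (S * Sᵀ) n).PosDef := by
  rw [← ctrbMat_mul_transpose]
  have hpsd : (ctrbMat A S * (ctrbMat A S)ᵀ).PosSemidef := by
    simpa only [conjTranspose_eq_transpose_of_trivial] using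
      posSemidef_self_mul_conjTranspose (ctrbMat A S)
  refine hpsd.posDef_iff_isUnit.mpr (isUnit_of_rank_eq_card ?_)
  rw [rank_self_mul_transpose, hrank, Fintype.card_fin]

lemma exists_eventually_riccatiSeq_le_smul (hQ : Q.PosSemidef) (hR : R.PosDef)
    (hG : (ctrbGramian A Q n).PosDef) (hX : X.PosSemidef) (hY : Y.PosSemidef) :
    ∃ a : ℝ, 0 ≤ a ∧ ∀ᶠ k in atTop, riccatiSeq A Q C R s Y k ≤ a • riccatiSeq A Q C R s X k := by
  obtain ⟨ε, hε, -, hεX⟩ :=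
    exists_pos_smul_ctrbGramian_le_riccatiSeq (A := A) (C := C) (s := s) hQ hR hX n
  have hXn := riccatiSeq_posSemidef (A := A) (C := C) (s := s) hQ hR hX n
  obtain ⟨ρ, hρ, hρY⟩ :=
    PosDef.exists_pos_smul_le (riccatiSeq_posSemidef hQ hR hY n).isHermitian (hG.smul hε)
  have ha : 1 ≤ max ρ⁻¹ 1 := le_max_right _ _
  have hYX : riccatiSeq A Q C R s Y n ≤ max ρ⁻¹ 1 • riccatiSeq A Q C R s X n :=
    calc riccatiSeq A Q C R s Y n = ρ⁻¹ • ρ • riccatiSeq A Q C R s Y n := by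
          rw [smul_smul, inv_mul_cancel₀ hρ.ne', one_smul]
      _ ≤ ρ⁻¹ • riccatiSeq A Q C R s X n :=
          smul_le_smul_of_nonneg_left (hρY.trans hεX) (inv_nonneg.mpr hρ.le)
      _ ≤ max ρ⁻¹ 1 • riccatiSeq A Q C R s X n :=
          smul_le_smul_of_nonneg_right (le_max_left _ _) hXn.nonneg
  refine ⟨max ρ⁻¹ 1, by linarith, ?_⟩
  filter_upwards [eventually_ge_atTop n] with k hk
  obtain ⟨t, rfl⟩ := Nat.exists_eq_add_of_le' hk
  rw [riccatiSeq_add s Y, riccatiSeq_add s X]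
  exact (riccatiSeq_mono hQ hR (riccatiSeq_posSemidef hQ hR hY n) hYX t).trans
    (riccatiSeq_smul_le hQ hR hXn ha t)

end Riccati

structure IsTailFunctional (F : (ℕ → EReal) → EReal) : Prop where
  comp_add_right (u : ℕ → EReal) (j : ℕ) : F (fun k => u (k + j)) = F u
  mono {u v : ℕ → EReal} : u ≤ᶠ[atTop] v → F u ≤ F v
  const_mul (u : ℕ → EReal) {c : ℝ} : 0 ≤ c → F (fun k => c * u k) = c * F u
  measurable {δ : Type} [MeasurableSpace δ] {f : ℕ → δ → EReal} :
    (∀ k, Measurable (f k)) → Measurable fun x => F fun k => f k x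

lemma isTailFunctional_limsup : IsTailFunctional fun u => limsup u atTop where
  comp_add_right u j := limsup_nat_add u j
  mono h := limsup_le_limsup h
  const_mul u c hc := EReal.limsup_const_mul_of_nonneg_of_ne_top (EReal.coe_nonneg.mpr hc)
    (EReal.coe_ne_top c)
  measurable hf := Measurable.limsup hf

lemma isTailFunctional_liminf : IsTailFunctional fun u => liminf u atTop where
  comp_add_right u j := liminf_nat_add u j
  mono h := liminf_le_liminf h
  const_mul u c hc := EReal.liminf_const_mul_of_nonneg_of_ne_top (EReal.coe_nonneg.mpr hc)
    (EReal.coe_ne_top c)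
  measurable hf := Measurable.liminf hf

namespace IsTailFunctional

variable {F : (ℕ → EReal) → EReal}

lemma lt_top_of_eventually_le_mul (hF : IsTailFunctional F) {u v : ℕ → ℝ} {a : ℝ} (ha : 0 ≤ a)
    (h : ∀ᶠ k in atTop, v k ≤ a * u k) (hu : F (fun k => (u k : EReal)) < ⊤) :
    F (fun k => (v k : EReal)) < ⊤ :=
  calc F (fun k => (v k : EReal)) ≤ F (fun k => (a : EReal) * (u k : EReal)) :=
        hF.mono (h.mono fun k hk => by simpa only [← EReal.coe_mul, EReal.coe_le_coe_iff])
    _ = a * F (fun k => (u k : EReal)) := hF.const_mul _ ha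
    _ < ⊤ := lt_top_iff_ne_top.mpr <| (EReal.mul_ne_top _ _).mpr
        ⟨.inl (EReal.coe_ne_bot a), .inl (EReal.coe_nonneg.mpr ha), .inl (EReal.coe_ne_top a),
          .inr hu.ne⟩

end IsTailFunctional

section StarMixing

open ProbabilityTheory

variable {Ω : Type*} {γ : ℕ → Ω → Bool}

lemma pastSigma_mono (γ : ℕ → Ω → Bool) : Monotone (pastSigma γ) :=
  fun _ _ hkl => biSup_mono fun _ hi => le_trans hi hkl

lemma futureSigma_le_iSup_pastSigma (γ : ℕ → Ω → Bool) (j : ℕ) :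
    futureSigma γ j ≤ ⨆ k, pastSigma γ k :=
  iSup₂_le fun i _ => le_trans
    (le_iSup₂ (f := fun l (_ : l ∈ {l : ℕ | l ≤ i}) => MeasurableSpace.comap (γ l) ⊤) i
      (le_refl i))
    (le_iSup (pastSigma γ) i)

lemma measurable_futureSigma_shift (γ : ℕ → Ω → Bool) (j : ℕ) :
    Measurable[futureSigma γ j] fun ω i => γ (i + j) ω := by
  refine @measurable_pi_lambda Ω ℕ (fun _ => Bool) (futureSigma γ j) _ _ fun i => ?_
  exact measurable_iff_comap_le.mpr <|
    le_iSup₂ (f := fun i (_ : i ∈ {i : ℕ | j ≤ i}) => MeasurableSpace.comap (γ i) ⊤) (i + j)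
      (Nat.le_add_left j i)

variable [mΩ : MeasurableSpace Ω]

lemma pastSigma_le (hγ : ∀ k, Measurable (γ k)) (k : ℕ) : pastSigma γ k ≤ mΩ :=
  iSup₂_le fun i _ => measurable_iff_comap_le.mp (hγ i)

variable {μ : Measure Ω} [IsProbabilityMeasure μ]

lemma StarMixing.measure_inter_eq_mul (hmix : StarMixing μ γ) {k : ℕ} {s E : Set Ω}
    (hs : MeasurableSet[pastSigma γ k] s) (hE : ∀ j, MeasurableSet[futureSigma γ j] E) :
    μ (s ∩ E) = μ s * μ E := by
  obtain ⟨N, -, f, -, hf, hmix⟩ := hmix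
  have hbound : ∀ᶠ l in atTop,
      |(μ (s ∩ E)).toReal - (μ s).toReal * (μ E).toReal| ≤ f l * ((μ s).toReal * (μ E).toReal) :=
    eventually_atTop.mpr ⟨N, fun l hl => by
      simpa only [mul_assoc] using hmix l hl k s E hs (hE (k + l))⟩
  have hzero := le_antisymm
    (ge_of_tendsto (by simpa using hf.mul_const ((μ s).toReal * (μ E).toReal)) hbound)
    (abs_nonneg _)
  rw [abs_eq_zero, sub_eq_zero, ← ENNReal.toReal_mul] at hzero
  exact (ENNReal.toReal_eq_toReal_iff' (measure_ne_top μ _)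
    (ENNReal.mul_ne_top (measure_ne_top μ _) (measure_ne_top μ _))).mp hzero

theorem StarMixing.measure_eq_zero_or_one (hmix : StarMixing μ γ) (hγ : ∀ k, Measurable (γ k))
    {E : Set Ω} (hE : ∀ j, MeasurableSet[futureSigma γ j] E) : μ E = 0 ∨ μ E = 1 := by
  have hE_past : MeasurableSet[⨆ k, pastSigma γ k] E := futureSigma_le_iSup_pastSigma γ 0 E (hE 0)
  have hE_le : MeasurableSpace.generateFrom {E} ≤ mΩ :=
    MeasurableSpace.generateFrom_le fun t ht => ht ▸ iSup_le (pastSigma_le hγ) E hE_past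
  have hindep_past : ∀ k, Indep (pastSigma γ k)
      (MeasurableSpace.generateFrom {E}) μ := fun k =>
    IndepSets.indep (pastSigma_le hγ k) hE_le
      (@MeasurableSpace.isPiSystem_measurableSet Ω (pastSigma γ k)) (IsPiSystem.singleton E)
      (@MeasurableSpace.generateFrom_measurableSet Ω (pastSigma γ k)).symm rfl
      ((IndepSets_iff _ _ μ).mpr fun s t hs ht =>
        (Set.mem_singleton_iff.mp ht) ▸ hmix.measure_inter_eq_mul hs hE)
  have hindep := indep_iSup_of_directed_le hindep_past (pastSigma_le hγ) hE_le
    (pastSigma_mono γ).directed_le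
  exact measure_eq_zero_or_one_of_indepSet_self
    (hindep.indepSet_of_measurableSet hE_past (MeasurableSpace.measurableSet_generateFrom rfl))

end StarMixing

section TailEvents

variable {n m : ℕ} {A Q : Matrix (Fin n) (Fin n) ℝ} {C : Matrix (Fin m) (Fin n) ℝ}
  {R : Matrix (Fin m) (Fin m) ℝ} {X Y : Matrix (Fin n) (Fin n) ℝ} {F : (ℕ → EReal) → EReal}

lemma IsTailFunctional.trace_riccatiSeq_lt_top_of_lt_top (hF : IsTailFunctional F)
    (hQ : Q.PosSemidef) (hR : R.PosDef) (hG : (ctrbGramian A Q n).PosDef) (s : ℕ → Bool)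
    (hX : X.PosSemidef) (hY : Y.PosSemidef)
    (h : F (fun k => ((riccatiSeq A Q C R s X k).trace : EReal)) < ⊤) :
    F (fun k => ((riccatiSeq A Q C R s Y k).trace : EReal)) < ⊤ := by
  obtain ⟨a, ha, hYX⟩ := exists_eventually_riccatiSeq_le_smul (C := C) (s := s) hQ hR hG hX hY
  refine hF.lt_top_of_eventually_le_mul ha (hYX.mono fun k hk => ?_) h
  simpa only [trace_smul, smul_eq_mul] using trace_le_trace hk

lemma measurable_riccatiSeq {β : Type*} [MeasurableSpace β]
    (φ : Matrix (Fin n) (Fin n) ℝ → β) (X : Matrix (Fin n) (Fin n) ℝ) (k : ℕ) :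
    Measurable fun s : ℕ → Bool => φ (riccatiSeq A Q C R s X k) := by
  -- `riccatiSeq s X k` only depends on `s 0, …, s (k - 1)`, which range over a finite set
  let extend (v : Fin k → Bool) (i : ℕ) : Bool := if h : i < k then v ⟨i, h⟩ else false
  have hfactor : (fun s : ℕ → Bool => φ (riccatiSeq A Q C R s X k)) =
      (fun v => φ (riccatiSeq A Q C R (extend v) X k)) ∘ fun s (i : Fin k) => s i :=
    funext fun s => congrArg φ (riccatiSeq_congr X fun i hi => by simp [extend, hi])
  rw [hfactor]
  exact Measurable.of_discrete.comp (measurable_pi_lambda _ fun i => measurable_pi_apply _)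

variable {Ω : Type*}

lemma IsTailFunctional.measurableSet_futureSigma (hF : IsTailFunctional F) (hQ : Q.PosSemidef)
    (hR : R.PosDef) (hG : (ctrbGramian A Q n).PosDef) (γ : ℕ → Ω → Bool) (hX : X.PosSemidef)
    (j : ℕ) :
    MeasurableSet[futureSigma γ j]
      {ω | F (fun k => ((filtSeq A Q C R γ X k ω).trace : EReal)) < ⊤} := by
  have hB : MeasurableSet {s | F (fun k => ((riccatiSeq A Q C R s X k).trace : EReal)) < ⊤} :=
    measurableSet_lt (hF.measurable fun k => measurable_riccatiSeq (fun M => (M.trace : EReal)) X k)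
      measurable_const
  convert measurable_futureSigma_shift γ j hB using 1
  ext ω
  have hXj := riccatiSeq_posSemidef (A := A) (C := C) (s := fun i => γ i ω) hQ hR hX j
  simp only [Set.mem_ofPred_eq, Set.mem_preimage, filtSeq_eq_riccatiSeq]
  rw [← hF.comp_add_right _ j]
  simp only [riccatiSeq_add _ X j]
  exact ⟨hF.trace_riccatiSeq_lt_top_of_lt_top hQ hR hG _ hXj hX,
    hF.trace_riccatiSeq_lt_top_of_lt_top hQ hR hG _ hX hXj⟩

end TailEvents

theorem zero_one_law_as_stability_general
    {n m : ℕ}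
    (A : Matrix (Fin n) (Fin n) ℝ)
    (C : Matrix (Fin m) (Fin n) ℝ)
    (Q : Matrix (Fin n) (Fin n) ℝ) (hQ : Q.PosSemidef)
    (hCtrb : (ctrbMat A ((hQ.1.eigenvectorUnitary : Matrix (Fin n) (Fin n) ℝ) *
      diagonal (Real.sqrt ∘ hQ.1.eigenvalues) * (star hQ.1.eigenvectorUnitary : Matrix (Fin n) (Fin n) ℝ))).rank = n)
    (R : Matrix (Fin m) (Fin m) ℝ) (hR : R.PosDef)
    {Ω : Type*} [MeasurableSpace Ω] (ℙ : Measure Ω) [IsProbabilityMeasure ℙ]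
    (γ : ℕ → Ω → Bool) (hγ : ∀ k, Measurable (γ k))
    (hmix : StarMixing ℙ γ)
    (P0 : Matrix (Fin n) (Fin n) ℝ) (hP0 : P0.PosSemidef) :
    (ℙ {ω | atTop.limsup (fun k => ((filtSeq A Q C R γ P0 k ω).trace : EReal)) < ⊤} = 1 ∨
      ℙ {ω | atTop.limsup (fun k => ((filtSeq A Q C R γ P0 k ω).trace : EReal)) < ⊤} = 0) ∧
    (ℙ {ω | atTop.liminf (fun k => ((filtSeq A Q C R γ P0 k ω).trace : EReal)) < ⊤} = 1 ∨
      ℙ {ω | atTop.liminf (fun k => ((filtSeq A Q C R γ P0 k ω).trace : EReal)) < ⊤} = 0) := by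
  have hG : (ctrbGramian A Q n).PosDef := by
    simpa only [hQ.spectral_sqrt_mul_transpose] using ctrbGramian_posDef hCtrb
  have zero_or_one : ∀ F, IsTailFunctional F →
      ℙ {ω | F (fun k => ((filtSeq A Q C R γ P0 k ω).trace : EReal)) < ⊤} = 1 ∨
        ℙ {ω | F (fun k => ((filtSeq A Q C R γ P0 k ω).trace : EReal)) < ⊤} = 0 :=
    fun F hF => (hmix.measure_eq_zero_or_one hγ
      (hF.measurableSet_futureSigma hQ hR hG γ hP0)).symm
  exact ⟨zero_or_one _ isTailFunctional_limsup, zero_or_one _ isTailFunctional_liminf⟩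

/-- Zero-one law for upper and lower almost sure stabilities of Kalman filtering with
`*`-mixing packet losses. -/
theorem zero_one_law_as_stability
    {n m : ℕ} (hn : 0 < n) (hm : 0 < m)
    (A : Matrix (Fin n) (Fin n) ℝ) (hA : IsUnit A.det)
    (hAeig : ∀ μ ∈ spectrum ℂ (A.map Complex.ofReal), 1 ≤ ‖μ‖)
    (C : Matrix (Fin m) (Fin n) ℝ) (hObs : (obsMat C A n).rank = n)
    (Q : Matrix (Fin n) (Fin n) ℝ) (hQ : Q.PosSemidef)
    (hCtrb : (ctrbMat A ((hQ.1.eigenvectorUnitary : Matrix (Fin n) (Fin n) ℝ) *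
      diagonal (Real.sqrt ∘ hQ.1.eigenvalues) * (star hQ.1.eigenvectorUnitary : Matrix (Fin n) (Fin n) ℝ))).rank = n)
    (R : Matrix (Fin m) (Fin m) ℝ) (hR : R.PosDef)
    {Ω : Type*} [MeasurableSpace Ω] (ℙ : Measure Ω) [IsProbabilityMeasure ℙ]
    (γ : ℕ → Ω → Bool) (hγ : ∀ k, Measurable (γ k))
    (hmix : StarMixing ℙ γ)
    (P0 : Matrix (Fin n) (Fin n) ℝ) (hP0 : P0.PosSemidef) :
    (ℙ {ω | atTop.limsup (fun k => ((filtSeq A Q C R γ P0 k ω).trace : EReal)) < ⊤} = 1 ∨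
      ℙ {ω | atTop.limsup (fun k => ((filtSeq A Q C R γ P0 k ω).trace : EReal)) < ⊤} = 0) ∧
    (ℙ {ω | atTop.liminf (fun k => ((filtSeq A Q C R γ P0 k ω).trace : EReal)) < ⊤} = 1 ∨
      ℙ {ω | atTop.liminf (fun k => ((filtSeq A Q C R γ P0 k ω).trace : EReal)) < ⊤} = 0) :=
  zero_one_law_as_stability_general A C Q hQ hCtrb R hR ℙ γ hγ hmix P0 hP0
end
end

section
/- Let {a_k}_{k≥1} be a monotonic sequence of nonnegative real numbers and l ≥ 2 an integer. Then ∑_{i=0}^∞ ∏_{k=il+1}^{(i+1)l} a_k = ∞ holds if and only if ∑_{k=1}^∞ (a_k)^l = ∞. -/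
open Filter

private lemma sum_blocks' (g : ℕ → ℝ) (l n : ℕ) :
    ∑ i ∈ Finset.range n, ∑ k ∈ Finset.Icc (i * l + 1) ((i + 1) * l), g k
      = ∑ j ∈ Finset.range (n * l), g (j + 1) := by
  induction n with
  | zero => simp
  | succ n ih =>
    rw [Finset.sum_range_succ, ih, show (n + 1) * l = n * l + l by ring,
      Finset.sum_range_add]
    congr 1
    rw [show Finset.Icc (n * l + 1) (n * l + l) = Finset.Ico (n * l + 1) (n * l + l + 1) by
        rw [Finset.Ico_add_one_right_eq_Icc],
      Finset.sum_Ico_eq_sum_range,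
      show n * l + l + 1 - (n * l + 1) = l by omega]
    exact Finset.sum_congr rfl fun i _ => by congr 1; omega

/-- For a monotone sequence of nonnegative reals `a₁, a₂, …` and an integer `l ≥ 2`,
the series `∑ᵢ ∏_{k=il+1}^{(i+1)l} aₖ` diverges if and only if `∑ₖ aₖ^l` diverges. -/
theorem block_products_div_iff_pow_div
    (a : ℕ → ℝ) (ha : ∀ k, 1 ≤ k → 0 ≤ a k)
    (hmono : (∀ j k, 1 ≤ j → j ≤ k → a j ≤ a k) ∨ (∀ j k, 1 ≤ j → j ≤ k → a k ≤ a j))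
    (l : ℕ) (hl : 2 ≤ l) :
    (¬ Summable fun i : ℕ => ∏ k ∈ Finset.Icc (i * l + 1) ((i + 1) * l), a k) ↔
      ¬ Summable fun k : ℕ => a (k + 1) ^ l := by
  have hl1 : 1 ≤ l := by omega
  set P : ℕ → ℝ := fun i => ∏ k ∈ Finset.Icc (i * l + 1) ((i + 1) * l), a k with hPdef
  set S : ℕ → ℝ := fun i => ∑ k ∈ Finset.Icc (i * l + 1) ((i + 1) * l), a k ^ l with hSdef
  have ha' : ∀ i k, k ∈ Finset.Icc (i * l + 1) ((i + 1) * l) → 0 ≤ a k := by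
    intro i k hk
    exact ha k (by have := (Finset.mem_Icc.mp hk).1; omega)
  have hP0 : ∀ i, 0 ≤ P i := fun i => Finset.prod_nonneg (ha' i)
  have hS0 : ∀ i, 0 ≤ S i := fun i => Finset.sum_nonneg fun k hk => pow_nonneg (ha' i k hk) l
  have hT0 : ∀ j : ℕ, 0 ≤ a (j + 1) ^ l := fun j => pow_nonneg (ha _ (by omega)) l
  have hmul : ∀ i : ℕ, (i + 1) * l = i * l + l := fun i => by ring
  have hcard : ∀ i, (Finset.Icc (i * l + 1) ((i + 1) * l)).card = l := by
    intro i; rw [Nat.card_Icc]; have := hmul i; omega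
  have hmemR : ∀ i, (i + 1) * l ∈ Finset.Icc (i * l + 1) ((i + 1) * l) := by
    intro i; rw [Finset.mem_Icc]; have := hmul i; omega
  have hmemL : ∀ i, i * l + 1 ∈ Finset.Icc (i * l + 1) ((i + 1) * l) := by
    intro i; rw [Finset.mem_Icc]; have := hmul i; omega
  have hpos : ∀ i : ℕ, 1 ≤ (i + 1) * l := by intro i; have := hmul i; omega
  -- key: Summable P ↔ Summable S
  have key : Summable P ↔ Summable S := by
    rcases hmono with hinc | hdec
    · -- nondecreasing : max of block i is a ((i+1)*l)
      have hPS : ∀ i, P i ≤ S i := by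
        intro i
        have h1 : P i ≤ a ((i + 1) * l) ^ l := by
          calc P i ≤ ∏ k ∈ Finset.Icc (i * l + 1) ((i + 1) * l), a ((i + 1) * l) :=
                Finset.prod_le_prod (ha' i) (fun k hk => hinc k ((i + 1) * l)
                  (by have := (Finset.mem_Icc.mp hk).1; omega) (Finset.mem_Icc.mp hk).2)
            _ = a ((i + 1) * l) ^ l := by rw [Finset.prod_const, hcard i]
        have h2 : a ((i + 1) * l) ^ l ≤ S i :=
          Finset.single_le_sum (f := fun k => a k ^ l)
            (fun k hk => pow_nonneg (ha' i k hk) l) (hmemR i)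
        linarith
      have hSP : ∀ i, S i ≤ (l : ℝ) * P (i + 1) := by
        intro i
        have h1 : S i ≤ (l : ℝ) * a ((i + 1) * l) ^ l := by
          calc S i ≤ ∑ k ∈ Finset.Icc (i * l + 1) ((i + 1) * l), a ((i + 1) * l) ^ l :=
                Finset.sum_le_sum (fun k hk => pow_le_pow_left₀ (ha' i k hk)
                  (hinc k ((i + 1) * l) (by have := (Finset.mem_Icc.mp hk).1; omega)
                    (Finset.mem_Icc.mp hk).2) l)
            _ = (l : ℝ) * a ((i + 1) * l) ^ l := by
                rw [Finset.sum_const, hcard i, nsmul_eq_mul]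
        have h2 : a ((i + 1) * l) ^ l ≤ P (i + 1) := by
          calc a ((i + 1) * l) ^ l
              = ∏ k ∈ Finset.Icc ((i + 1) * l + 1) ((i + 1 + 1) * l), a ((i + 1) * l) := by
                rw [Finset.prod_const, hcard (i + 1)]
            _ ≤ P (i + 1) :=
                Finset.prod_le_prod (fun k _ => ha _ (hpos i))
                  (fun k hk => hinc ((i + 1) * l) k (hpos i)
                    (by have := (Finset.mem_Icc.mp hk).1; omega))
        have h3 := mul_le_mul_of_nonneg_left h2 (by positivity : (0 : ℝ) ≤ (l : ℝ))
        linarith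
      constructor
      · intro hPsum
        have h1 : Summable fun i => P (i + 1) := (summable_nat_add_iff 1).2 hPsum
        have h2 : Summable fun i => (l : ℝ) * P (i + 1) := h1.mul_left _
        exact Summable.of_nonneg_of_le hS0 hSP h2
      · intro hSsum
        exact Summable.of_nonneg_of_le hP0 hPS hSsum
    · -- nonincreasing : max of block i is a (i*l+1)
      have hPS : ∀ i, P i ≤ S i := by
        intro i
        have h1 : P i ≤ a (i * l + 1) ^ l := by
          calc P i ≤ ∏ k ∈ Finset.Icc (i * l + 1) ((i + 1) * l), a (i * l + 1) :=
                Finset.prod_le_prod (ha' i) (fun k hk => hdec (i * l + 1) k (by omega)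
                  (Finset.mem_Icc.mp hk).1)
            _ = a (i * l + 1) ^ l := by rw [Finset.prod_const, hcard i]
        have h2 : a (i * l + 1) ^ l ≤ S i :=
          Finset.single_le_sum (f := fun k => a k ^ l)
            (fun k hk => pow_nonneg (ha' i k hk) l) (hmemL i)
        linarith
      have hSP : ∀ i, S (i + 1) ≤ (l : ℝ) * P i := by
        intro i
        have h1 : S (i + 1) ≤ (l : ℝ) * a ((i + 1) * l) ^ l := by
          calc S (i + 1)
              ≤ ∑ k ∈ Finset.Icc ((i + 1) * l + 1) ((i + 1 + 1) * l), a ((i + 1) * l) ^ l :=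
                Finset.sum_le_sum (fun k hk => pow_le_pow_left₀ (ha' (i + 1) k hk)
                  (hdec ((i + 1) * l) k (hpos i)
                    (by have := (Finset.mem_Icc.mp hk).1; omega)) l)
            _ = (l : ℝ) * a ((i + 1) * l) ^ l := by
                rw [Finset.sum_const, hcard (i + 1), nsmul_eq_mul]
        have h2 : a ((i + 1) * l) ^ l ≤ P i := by
          calc a ((i + 1) * l) ^ l
              = ∏ k ∈ Finset.Icc (i * l + 1) ((i + 1) * l), a ((i + 1) * l) := by
                rw [Finset.prod_const, hcard i]
            _ ≤ P i :=
                Finset.prod_le_prod (fun k _ => ha _ (hpos i))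
                  (fun k hk => hdec k ((i + 1) * l)
                    (by have := (Finset.mem_Icc.mp hk).1; omega)
                    (Finset.mem_Icc.mp hk).2)
        have h3 := mul_le_mul_of_nonneg_left h2 (by positivity : (0 : ℝ) ≤ (l : ℝ))
        linarith
      constructor
      · intro hPsum
        have h2 : Summable fun i => (l : ℝ) * P i := hPsum.mul_left _
        have h3 : Summable fun i => S (i + 1) := Summable.of_nonneg_of_le
          (fun i => hS0 (i + 1)) hSP h2
        exact (summable_nat_add_iff 1).1 h3
      · intro hSsum
        exact Summable.of_nonneg_of_le hP0 hPS hSsum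
  -- grouping: Summable (fun k => a (k+1) ^ l) ↔ Summable S
  have hTS : (Summable fun k : ℕ => a (k + 1) ^ l) ↔ Summable S := by
    constructor
    · intro hT
      apply summable_of_sum_range_le (c := ∑' j, a (j + 1) ^ l) hS0
      intro n
      rw [hSdef, sum_blocks' (fun k => a k ^ l) l n]
      exact Summable.sum_le_tsum (Finset.range (n * l)) (fun j _ => hT0 j) hT
    · intro hSs
      apply summable_of_sum_range_le (c := ∑' i, S i) hT0
      intro n
      calc ∑ j ∈ Finset.range n, a (j + 1) ^ l
          ≤ ∑ j ∈ Finset.range (n * l), a (j + 1) ^ l :=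
            Finset.sum_le_sum_of_subset_of_nonneg
              (Finset.range_subset_range.2 (Nat.le_mul_of_pos_right n (by omega)))
              (fun j _ _ => hT0 j)
        _ = ∑ i ∈ Finset.range n, S i := (sum_blocks' (fun k => a k ^ l) l n).symm
        _ ≤ ∑' i, S i := Summable.sum_le_tsum (Finset.range n) (fun i _ => hS0 i) hSs
  exact not_congr (key.trans hTS.symm)
end
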